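/- arXiv:1809.08699 — 5 statements merged into one kernel-verified Lean document; each statement's English description precedes it below -/
import Mathlib

section
/- Let d ≥ 2 be even and j ∈ F_q be nonzero. Then the sphere S_j = {x ∈ F_q^d : x_1² + ⋯ + x_d² = j} contains an affine subspace of cardinality q^{(d−2)/2}. -/
open Finset

/-- Any element of a finite field of odd cardinality is a sum of two squares. -/
private theorem sqAddSq' {F : Type*} [Field F] [Fintype F]
    (hodd : Fintype.card F % 2 = 1) (x : F) : ∃ a b : F, a ^ 2 + b ^ 2 = x := by
  let f : Polynomial F := Polynomial.X ^ 2
  let g : Polynomial F := Polynomial.X ^ 2 - Polynomial.C x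
  obtain ⟨a, b, hab⟩ : ∃ a b, f.eval a + g.eval b = 0 :=
    FiniteField.exists_root_sum_quadratic (Polynomial.degree_X_pow 2)
      (Polynomial.degree_X_pow_sub_C (by norm_num) _) hodd
  refine ⟨a, b, ?_⟩
  rw [← sub_eq_zero]
  simpa only [f, g, Polynomial.eval_C, Polynomial.eval_X, Polynomial.eval_pow,
    Polynomial.eval_sub, ← add_sub_assoc] using hab

/-- Auxiliary predicate: there is an injective linear map `f` from `F^n` and a vector `v`
such that `v + f c` lies on the sphere of radius `j` for all `c`. -/
private def SGood (F : Type*) [Field F] [Fintype F] (j : F) (n d : ℕ) : Prop :=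
  ∃ (f : (Fin n → F) →ₗ[F] (Fin d → F)) (v : Fin d → F),
    Function.Injective f ∧ ∀ c, ∑ i, (v i + f c i) ^ 2 = j

private theorem sgood_base2 {F : Type*} [Field F] [Fintype F] {j : F}
    (hodd : Fintype.card F % 2 = 1) : SGood F j 0 2 := by
  obtain ⟨s, t, hst⟩ := sqAddSq' hodd j
  refine ⟨0, ![s, t], Function.injective_of_subsingleton _, fun c => ?_⟩
  simpa [Fin.sum_univ_two] using hst

private theorem sgood_base4 {F : Type*} [Field F] [Fintype F] {j : F}
    (h2 : (2 : F) ≠ 0) {a b : F} (hab : a ^ 2 + b ^ 2 = -1) : SGood F j 1 4 := by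
  refine ⟨LinearMap.smulRight (LinearMap.proj 0) ![1, 0, a, b],
    ![0, (j + 1) / 2, b * ((j - 1) / 2), -(a * ((j - 1) / 2))], ?_, ?_⟩
  · intro c c' h
    have h0 := congrFun h 0
    simp [Matrix.cons_val_zero] at h0
    funext i
    fin_cases i
    exact h0
  · intro c
    have hsq : ((j + 1) / 2) ^ 2 - ((j - 1) / 2) ^ 2 = j := by field_simp; ring
    rw [Fin.sum_univ_four]
    simp only [LinearMap.smulRight_apply, LinearMap.proj_apply, Pi.smul_apply, smul_eq_mul,
      Matrix.cons_val_zero, Matrix.cons_val_one, Matrix.head_cons, Matrix.cons_val_two,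
      Matrix.cons_val_three, Matrix.tail_cons]
    linear_combination (c 0 ^ 2 + ((j - 1) / 2) ^ 2) * hab + hsq

private theorem sgood_step {F : Type*} [Field F] [Fintype F] {j : F} {a b : F}
    (hab : a ^ 2 + b ^ 2 = -1) {n d : ℕ} (h : SGood F j n d) : SGood F j (n + 2) (d + 4) := by
  classical
  obtain ⟨f, v, hinj, hsum⟩ := h
  -- the "append" linear map
  let A : ((Fin d → F) × (Fin 4 → F)) →ₗ[F] (Fin (d + 4) → F) :=
    { toFun := fun p => Fin.append p.1 p.2
      map_add' := by
        intro p q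
        funext i
        refine Fin.addCases (fun i => ?_) (fun i => ?_) i <;>
          simp [Fin.append_left, Fin.append_right]
      map_smul' := by
        intro r p
        funext i
        refine Fin.addCases (fun i => ?_) (fun i => ?_) i <;>
          simp [Fin.append_left, Fin.append_right] }
  let front : (Fin (n + 2) → F) →ₗ[F] (Fin n → F) := LinearMap.funLeft F F (Fin.castAdd 2)
  let g : (Fin (n + 2) → F) →ₗ[F] (Fin 4 → F) :=
    LinearMap.smulRight (LinearMap.proj (Fin.natAdd n 0)) ![1, 0, a, b] +
    LinearMap.smulRight (LinearMap.proj (Fin.natAdd n 1)) ![0, 1, -b, a]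
  refine ⟨A ∘ₗ ((f ∘ₗ front).prod g), Fin.append v (0 : Fin 4 → F), ?_, ?_⟩
  · intro c c' h
    have hfront : f (front c) = f (front c') := by
      funext i
      have := congrFun h (Fin.castAdd 4 i)
      simpa [A, Fin.append_left] using this
    have hfr := hinj hfront
    have hg0 : c (Fin.natAdd n 0) = c' (Fin.natAdd n 0) := by
      have := congrFun h (Fin.natAdd d 0)
      simpa [A, g, Fin.append_right] using this
    have hg1 : c (Fin.natAdd n 1) = c' (Fin.natAdd n 1) := by
      have := congrFun h (Fin.natAdd d 1)
      simpa [A, g, Fin.append_right] using this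
    funext i
    refine Fin.addCases (fun i => ?_) (fun i => ?_) i
    · exact congrFun hfr i
    · fin_cases i
      · exact hg0
      · exact hg1
  · intro c
    rw [Fin.sum_univ_add]
    have hleft : ∀ i : Fin d,
        (Fin.append v (0 : Fin 4 → F) (Fin.castAdd 4 i) +
          (A ∘ₗ ((f ∘ₗ front).prod g)) c (Fin.castAdd 4 i)) ^ 2
        = (v i + f (front c) i) ^ 2 := by
      intro i
      simp [A, Fin.append_left]
    have hright : ∀ i : Fin 4,
        (Fin.append v (0 : Fin 4 → F) (Fin.natAdd d i) +
          (A ∘ₗ ((f ∘ₗ front).prod g)) c (Fin.natAdd d i)) ^ 2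
        = (g c i) ^ 2 := by
      intro i
      simp [A, Fin.append_right]
    rw [Finset.sum_congr rfl fun i _ => hleft i, Finset.sum_congr rfl fun i _ => hright i,
      hsum (front c)]
    have : ∑ i : Fin 4, (g c i) ^ 2 = 0 := by
      rw [Fin.sum_univ_four]
      simp only [g, LinearMap.add_apply, LinearMap.smulRight_apply, LinearMap.proj_apply,
        Pi.add_apply, Pi.smul_apply, smul_eq_mul, Matrix.cons_val_zero, Matrix.cons_val_one,
        Matrix.head_cons,
        Matrix.cons_val_two, Matrix.cons_val_three, Matrix.tail_cons]
      linear_combination (c (Fin.natAdd n 0) ^ 2 + c (Fin.natAdd n 1) ^ 2) * hab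
    rw [this, add_zero]

private theorem sgood_all {F : Type*} [Field F] [Fintype F] {j : F}
    (hodd : Fintype.card F % 2 = 1) :
    ∀ k : ℕ, SGood F j (2 * k) (4 * k + 2) ∧ SGood F j (2 * k + 1) (4 * k + 4) := by
  have hchar : ringChar F ≠ 2 := by
    intro h
    have := FiniteField.even_card_iff_char_two.mp h
    omega
  have h2 : (2 : F) ≠ 0 := Ring.two_ne_zero hchar
  obtain ⟨a, b, hab⟩ := sqAddSq' hodd (-1 : F)
  intro k
  induction k with
  | zero =>
    refine ⟨?_, ?_⟩
    · simpa using sgood_base2 hodd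
    · simpa using sgood_base4 h2 hab
  | succ k ih =>
    refine ⟨?_, ?_⟩
    · have := sgood_step hab ih.1
      rw [show 2 * (k + 1) = 2 * k + 2 from by ring,
        show 4 * (k + 1) + 2 = (4 * k + 2) + 4 from by ring]
      exact this
    · have := sgood_step hab ih.2
      rw [show 2 * (k + 1) + 1 = (2 * k + 1) + 2 from by ring,
        show 4 * (k + 1) + 4 = (4 * k + 4) + 4 from by ring]
      exact this

/-- For even `d ≥ 2` and `j ≠ 0`, the sphere `{x ∈ F_q^d : x₁² + ⋯ + x_d² = j}`
contains an affine subspace of cardinality `q^{(d-2)/2}`. -/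
theorem stmt_2 {F : Type*} [Field F] [Fintype F] (hodd : Odd (Fintype.card F))
    (d : ℕ) (hd2 : 2 ≤ d) (hde : Even d) (j : F) (hj : j ≠ 0) :
    ∃ (W : Submodule F (Fin d → F)) (v : Fin d → F),
      (∀ w ∈ W, ∑ i, (v i + w i) ^ 2 = j) ∧
      Nat.card W = Fintype.card F ^ ((d - 2) / 2) := by
  have hcard : Fintype.card F % 2 = 1 := Nat.odd_iff.mp hodd
  have hd2' : d % 2 = 0 := Nat.even_iff.mp hde
  have key : ∃ n : ℕ, n = (d - 2) / 2 ∧ SGood F j n d := by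
    rcases Nat.lt_or_ge (d % 4) 2 with h4 | h4
    · -- d % 4 = 0, so d = 4k + 4 with k = d/4 - 1
      have h40 : d % 4 = 0 := by omega
      obtain ⟨k, hk⟩ : ∃ k, d = 4 * k + 4 := ⟨d / 4 - 1, by omega⟩
      refine ⟨2 * k + 1, by omega, ?_⟩
      rw [hk]
      exact (sgood_all hcard k).2
    · -- d % 4 = 2
      have h42 : d % 4 = 2 := by omega
      obtain ⟨k, hk⟩ : ∃ k, d = 4 * k + 2 := ⟨d / 4, by omega⟩
      refine ⟨2 * k, by omega, ?_⟩
      rw [hk]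
      exact (sgood_all hcard k).1
  obtain ⟨n, hn, f, v, hinj, hsum⟩ := key
  refine ⟨LinearMap.range f, v, ?_, ?_⟩
  · intro w hw
    obtain ⟨c, rfl⟩ := LinearMap.mem_range.mp hw
    exact hsum c
  · rw [Nat.card_congr (LinearEquiv.ofInjective f hinj).toEquiv.symm,
      Nat.card_eq_fintype_card, Fintype.card_fun, Fintype.card_fin, hn]
end

section
/- Let S₀ = {x ∈ F_q^d : x_1²+⋯+x_d² = 0} with d ≡ 2 (mod 4) and q ≡ 3 (mod 4). Then for every α ∈ F_q^d, the normalized Fourier transform satisfies Ŝ₀(α) = (1/q)·δ₀(α) − q^{−(d+2)/2} Σ_{r∈F_q^*} χ(r‖α‖), where δ₀(α) = 1 if α = 0 and 0 otherwise. -/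
open Finset

/-!
Summing `χ(r ‖x‖)` over `r` detects the zero sphere, so
`q · Σ_{‖x‖ = 0} χ(-α·x) = Σ_r Σ_x χ(r ‖x‖ - α·x)`. The term `r = 0` is `q^d δ₀(α)`. For `r ≠ 0`
the inner sum factors over the coordinates, and completing the square in each one gives
`χ(-‖α‖/(4r)) · (η(r) G)^d`, where `η` is the quadratic character and `G` its Gauss sum.
As `d` is even, `η(r)^d = 1`; as `q ≡ 3 (mod 4)`, `G² = η(-1) q = -q`, hence `G^d = -q^{d/2}`
because `d/2` is odd. The substitution `r ↦ -1/(4r)` of `F^*` turns what is left into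
`Σ_{r ≠ 0} χ(r ‖α‖)`.
-/

lemma AddChar.map_sum_eq_prod {A M ι : Type*} [AddCommMonoid A] [CommMonoid M] (ψ : AddChar A M)
    (s : Finset ι) (f : ι → A) : ψ (∑ i ∈ s, f i) = ∏ i ∈ s, ψ (f i) :=
  map_prod ψ.toMonoidHom (fun i ↦ Multiplicative.ofAdd (f i)) s

lemma four_ne_zero_of_ringChar_ne_two {K : Type*} [Ring K] [NoZeroDivisors K] [Nontrivial K]
    (h : ringChar K ≠ 2) : (4 : K) ≠ 0 := by
  simpa [show (4 : K) = 2 ^ 2 by norm_num] using pow_ne_zero 2 (Ring.two_ne_zero h)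

lemma ringChar_ne_two_of_card_mod_four_eq_three {F : Type*} [Field F] [Fintype F]
    (hq : Fintype.card F % 4 = 3) : ringChar F ≠ 2 := fun h ↦ by
  have := FiniteField.even_card_of_char_two h
  omega

lemma sum_filter_ne_zero_comp_inv_mul {F M : Type*} [Field F] [Fintype F] [DecidableEq F]
    [AddCommMonoid M] {c : F} (hc : c ≠ 0) (f : F → M) :
    ∑ r with r ≠ 0, f (c * r)⁻¹ = ∑ r with r ≠ 0, f r := by
  have hinv {r : F} (hr : r ≠ 0) : (c * (c * r)⁻¹)⁻¹ = r := by field_simp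
  refine sum_nbij' (fun r ↦ (c * r)⁻¹) (fun r ↦ (c * r)⁻¹) ?_ ?_ (fun r hr ↦ ?_) (fun r hr ↦ ?_)
    fun _ _ ↦ rfl <;> simp_all

section

variable {F : Type*} [Field F] [Fintype F] [DecidableEq F] {R : Type*} [CommRing R]

variable (F R) in
abbrev quadraticCharTo : MulChar F R := (quadraticChar F).ringHomComp (Int.castRingHom R)

lemma quadraticCharTo_isQuadratic : (quadraticCharTo F R).IsQuadratic :=
  (quadraticChar_isQuadratic F).comp _

-- `x ^ 2 = a` has `1 + η a` solutions.
lemma sum_comp_sq_eq_sum_quadraticChar_add_one (hF : ringChar F ≠ 2) (f : F → R) :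
    ∑ s, f (s ^ 2) = ∑ a, (quadraticCharTo F R a + 1) * f a := by
  rw [← sum_fiberwise univ (· ^ 2) (fun s ↦ f (s ^ 2))]
  refine sum_congr rfl fun a _ ↦ ?_
  have hcard : #{s | s ^ 2 = a} = quadraticChar F a + 1 := by
    simpa [Set.toFinset_ofPred] using quadraticChar_card_sqrts hF a
  rw [sum_congr rfl fun s hs ↦ by rw [(mem_filter.mp hs).2], sum_const, nsmul_eq_mul]
  congr 1
  simpa using congr_arg (Int.cast : ℤ → R) hcard

lemma quadraticCharTo_pow_eq_one_of_even {r : F} (hr : r ≠ 0) {n : ℕ} (hn : Even n) :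
    quadraticCharTo F R r ^ n = 1 := by
  obtain rfl | hn0 := eq_or_ne n 0
  · exact pow_zero _
  rw [← MulChar.pow_apply' _ hn0, quadraticCharTo_isQuadratic.pow_even hn,
    MulChar.one_apply (Ne.isUnit hr)]

variable [IsDomain R] {ψ : AddChar F R}

lemma sum_addChar_mul_sq (hF : ringChar F ≠ 2) (hψ : ψ.IsPrimitive) {b : F} (hb : b ≠ 0) :
    ∑ s, ψ (b * s ^ 2) = quadraticCharTo F R b * gaussSum (quadraticCharTo F R) ψ := by
  have hshift : ∑ a, quadraticCharTo F R a * ψ (b * a) =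
      gaussSum (quadraticCharTo F R) (ψ.mulShift (Units.mk0 b hb)) := rfl
  rw [sum_comp_sq_eq_sum_quadraticChar_add_one hF (fun s ↦ ψ (b * s))]
  simp only [add_mul, one_mul, sum_add_distrib, hshift, gaussSum_mulShift_eq,
    quadraticCharTo_isQuadratic.inv]
  have hvanish : ∑ a, ψ (b * a) = 0 := AddChar.sum_eq_zero_of_ne_one (hψ hb)
  rw [hvanish, add_zero, Units.val_mk0]

lemma sum_addChar_mul_sq_add_mul (hF : ringChar F ≠ 2) (hψ : ψ.IsPrimitive) {r : F} (hr : r ≠ 0)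
    (a : F) :
    ∑ t, ψ (r * t ^ 2 + a * t) =
      ψ ((-4 * r)⁻¹ * a ^ 2) * (quadraticCharTo F R r * gaussSum (quadraticCharTo F R) ψ) := by
  have h2 : (2 : F) ≠ 0 := Ring.two_ne_zero hF
  have h4 : (4 : F) ≠ 0 := four_ne_zero_of_ringChar_ne_two hF
  have hsquare (s : F) : r * (s - a / (2 * r)) ^ 2 + a * (s - a / (2 * r)) =
      (-4 * r)⁻¹ * a ^ 2 + r * s ^ 2 := by
    field_simp
    ring
  rw [← sum_addChar_mul_sq hF hψ hr, mul_sum, ← Equiv.sum_comp (Equiv.subRight (a / (2 * r)))]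
  simp only [Equiv.subRight_apply, hsquare, AddChar.map_add_eq_mul]

lemma sum_addChar_mul_sum_sq_add_sum_mul {ι : Type*} [Fintype ι] [DecidableEq ι]
    (hF : ringChar F ≠ 2) (hψ : ψ.IsPrimitive) {r : F} (hr : r ≠ 0) (α : ι → F) :
    ∑ x : ι → F, ψ (r * ∑ i, x i ^ 2 + ∑ i, α i * x i) =
      ψ ((-4 * r)⁻¹ * ∑ i, α i ^ 2) *
        (quadraticCharTo F R r * gaussSum (quadraticCharTo F R) ψ) ^ Fintype.card ι := by
  have hsplit (x : ι → F) :
      r * ∑ i, x i ^ 2 + ∑ i, α i * x i = ∑ i, (r * x i ^ 2 + α i * x i) := by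
    rw [mul_sum, ← sum_add_distrib]
  simp only [hsplit, AddChar.map_sum_eq_prod]
  rw [← Fintype.prod_sum (fun i t ↦ ψ (r * t ^ 2 + α i * t))]
  simp only [sum_addChar_mul_sq_add_mul hF hψ hr, prod_mul_distrib, prod_const, card_univ,
    ← AddChar.map_sum_eq_prod, mul_sum, mul_pow]

lemma sum_addChar_sum_mul {ι : Type*} [Fintype ι] [DecidableEq ι] (hψ : ψ.IsPrimitive)
    (α : ι → F) :
    ∑ x : ι → F, ψ (∑ i, α i * x i) =
      if α = 0 then (Fintype.card F : R) ^ Fintype.card ι else 0 := by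
  simp only [AddChar.map_sum_eq_prod, mul_comm (α _)]
  rw [← Fintype.prod_sum (fun i t ↦ ψ (t * α i))]
  simp only [AddChar.sum_mulShift _ hψ, Nat.cast_ite, Nat.cast_zero, prod_ite_zero, prod_const,
    card_univ, funext_iff, mem_univ, forall_const, Pi.zero_apply]

lemma card_mul_sum_filter_eq_zero_eq_sum_sum {X : Type*} [Fintype X] (hψ : ψ.IsPrimitive)
    (g h : X → F) :
    Fintype.card F * ∑ x with g x = 0, ψ (h x) = ∑ r, ∑ x, ψ (r * g x + h x) := by
  rw [sum_comm, sum_filter, mul_sum]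
  refine sum_congr rfl fun x _ ↦ ?_
  simp only [AddChar.map_add_eq_mul, ← sum_mul, AddChar.sum_mulShift _ hψ]
  split_ifs <;> simp

lemma quadraticCharTo_ne_one (hF : ringChar F ≠ 2) (hR : ringChar R ≠ 2) :
    quadraticCharTo F R ≠ 1 := by
  obtain ⟨a, ha⟩ := quadraticChar_exists_neg_one' hF
  intro h
  have hval := congr_arg (· (a : F)) h
  simp only [MulChar.ringHomComp_apply, ha, MulChar.one_apply a.isUnit] at hval
  exact Ring.neg_one_ne_one_of_char_ne_two hR (by exact_mod_cast hval)

lemma gaussSum_quadraticCharTo_sq_of_card_mod_four_eq_three (hq : Fintype.card F % 4 = 3)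
    (hR : ringChar R ≠ 2) (hψ : ψ.IsPrimitive) :
    gaussSum (quadraticCharTo F R) ψ ^ 2 = -Fintype.card F := by
  have hF := ringChar_ne_two_of_card_mod_four_eq_three hq
  rw [gaussSum_sq (quadraticCharTo_ne_one hF hR) quadraticCharTo_isQuadratic hψ]
  simp [quadraticChar_neg_one hF, ZMod.χ₄_nat_three_mod_four hq]

end

theorem stmt_9_general {F : Type*} [Field F] [Fintype F] [DecidableEq F]
    (hq : Fintype.card F % 4 = 3)
    (χ : AddChar F ℂ) (hχ : χ ≠ 1)
    (d : ℕ) (hd : d % 4 = 2)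
    (α : Fin d → F) :
    ((Fintype.card F : ℂ) ^ d)⁻¹ *
        ∑ x ∈ Finset.univ.filter (fun x : Fin d → F => ∑ i, (x i) ^ 2 = 0),
          χ (-(∑ i, α i * x i)) =
      (Fintype.card F : ℂ)⁻¹ * (if α = 0 then 1 else 0) -
        ((Fintype.card F : ℂ) ^ ((d + 2) / 2))⁻¹ *
          ∑ r ∈ Finset.univ.filter (fun r : F => r ≠ 0), χ (r * ∑ i, (α i) ^ 2) := by
  have hF := ringChar_ne_two_of_card_mod_four_eq_three hq
  have hχ' : χ.IsPrimitive := AddChar.IsPrimitive.of_ne_one hχ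
  obtain ⟨m, rfl, hm⟩ : ∃ m, d = 2 * m ∧ Odd m := ⟨d / 2, by omega, Nat.odd_iff.mpr (by omega)⟩
  set q : ℂ := (Fintype.card F : ℂ)
  have hneg (x : Fin (2 * m) → F) : -∑ i, α i * x i = ∑ i, (-α) i * x i := by simp
  have hterm {r : F} (hr : r ≠ 0) :
      ∑ x : Fin (2 * m) → F, χ (r * ∑ i, x i ^ 2 + ∑ i, (-α) i * x i) =
        -q ^ m * χ ((-4 * r)⁻¹ * ∑ i, α i ^ 2) := by
    rw [sum_addChar_mul_sum_sq_add_sum_mul hF hχ' hr, mul_pow, Fintype.card_fin,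
      quadraticCharTo_pow_eq_one_of_even hr (even_two_mul m), one_mul,
      pow_mul, gaussSum_quadraticCharTo_sq_of_card_mod_four_eq_three hq (by simp) hχ',
      hm.neg_pow, mul_comm]
    simp only [Pi.neg_apply, neg_sq]
    rfl
  have key : q * ∑ x : Fin (2 * m) → F with ∑ i, x i ^ 2 = 0, χ (-∑ i, α i * x i) =
      q ^ (2 * m) * (if α = 0 then 1 else 0) - q ^ m * ∑ r with r ≠ 0, χ (r * ∑ i, α i ^ 2) := by
    have h4 : (-4 : F) ≠ 0 := neg_ne_zero.mpr (four_ne_zero_of_ringChar_ne_two hF)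
    simp only [hneg]
    rw [card_mul_sum_filter_eq_zero_eq_sum_sum hχ', ← add_sum_erase _ _ (mem_univ 0),
      ← filter_ne', sum_congr rfl fun r hr ↦ hterm (mem_filter.mp hr).2, ← mul_sum,
      sum_filter_ne_zero_comp_inv_mul h4 (fun s ↦ χ (s * _))]
    simp only [zero_mul, zero_add, sum_addChar_sum_mul hχ', neg_eq_zero, Fintype.card_fin,
      mul_ite, mul_one, mul_zero]
    ring
  have hq0 : q ≠ 0 := Nat.cast_ne_zero.mpr Fintype.card_ne_zero
  rw [show (2 * m + 2) / 2 = m + 1 by omega]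
  field_simp
  linear_combination q ^ (m + 1) * key

/-- Fourier transform of the zero sphere in `F_q^d` for `d ≡ 2 (mod 4)`, `q ≡ 3 (mod 4)`:
`Ŝ₀(α) = (1/q)δ₀(α) − q^{−(d+2)/2} ∑_{r≠0} χ(r‖α‖)`. -/
theorem stmt_9 {F : Type*} [Field F] [Fintype F] [DecidableEq F]
    (hodd : Odd (Fintype.card F)) (hq : Fintype.card F % 4 = 3)
    (χ : AddChar F ℂ) (hχ : χ ≠ 1)
    (d : ℕ) (hd : d % 4 = 2) (hd6 : 6 ≤ d)
    (α : Fin d → F) :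
    ((Fintype.card F : ℂ) ^ d)⁻¹ *
        ∑ x ∈ Finset.univ.filter (fun x : Fin d → F => ∑ i, (x i) ^ 2 = 0),
          χ (-(∑ i, α i * x i)) =
      (Fintype.card F : ℂ)⁻¹ * (if α = 0 then 1 else 0) -
        ((Fintype.card F : ℂ) ^ ((d + 2) / 2))⁻¹ *
          ∑ r ∈ Finset.univ.filter (fun r : F => r ≠ 0), χ (r * ∑ i, (α i) ^ 2) :=
  stmt_9_general hq χ hχ d hd α
end

section
/- Let A, B ⊆ F_q^d and for t ∈ F_q let μ(t) be the number of pairs (a,b) ∈ A×B with ‖a−b‖ = t. Then Σ_{t∈F_q} μ(t)² ≤ |A|²|B|²/q + (|A|/q) Σ_{a∈A} Σ_{s∈F_q^*} |Σ_{b∈B} χ(2s a·b − s‖b‖)|². -/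
/-!
By orthogonality of the primitive character `χ`, `q ∑_t μ(t)² = ∑_s |∑_{(a,b) ∈ A×B} χ(s‖a−b‖)|²`.
The term `s = 0` is `|A|²|B|²`. For `s ≠ 0`, write `‖a−b‖ = ‖a‖ − (2a·b − ‖b‖)`: the factor
`χ(s‖a‖)` has modulus one, so the inner sum over `b` is bounded in modulus by
`|∑_{b∈B} χ(2s a·b − s‖b‖)|`, and Cauchy–Schwarz in `a` gives the factor `|A|`.
-/

open Finset

theorem sum_card_filter_sq_eq_card_filter_eq {ι β : Type*} [Fintype β] [DecidableEq β]
    (P : Finset ι) (f : ι → β) :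
    ∑ t, #{p ∈ P | f p = t} ^ 2 = #{x ∈ P ×ˢ P | f x.1 = f x.2} := by
  rw [card_eq_sum_card_fiberwise (f := fun x => f x.1) (t := univ) (by simp)]
  refine sum_congr rfl fun t _ => ?_
  rw [sq, ← card_product, ← filter_product, filter_filter]
  congr 1
  exact filter_congr fun x _ => by constructor <;> rintro ⟨h₁, h₂⟩ <;> simp_all

theorem sum_sub_sq_eq {R ι : Type*} [CommRing R] [Fintype ι] (a b : ι → R) :
    ∑ i, (a i - b i) ^ 2 = ∑ i, a i ^ 2 - (2 * ∑ i, a i * b i - ∑ i, b i ^ 2) := by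
  simp only [mul_sum, ← sum_sub_distrib]
  exact sum_congr rfl fun i _ => by ring

namespace AddChar

theorem norm_sum_sum_sub_le {G α β : Type*} [AddCommGroup G] [Finite G]
    (ψ : AddChar G ℂ) (A : Finset α) (B : Finset β) (u : α → G) (v : α → β → G) :
    ‖∑ a ∈ A, ∑ b ∈ B, ψ (u a - v a b)‖ ≤ ∑ a ∈ A, ‖∑ b ∈ B, ψ (v a b)‖ := by
  refine (norm_sum_le _ _).trans_eq (sum_congr rfl fun a _ => ?_)
  simp_rw [sub_eq_add_neg, map_add_eq_mul, map_neg_eq_conj, ← mul_sum, ← map_sum, norm_mul,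
    norm_apply, one_mul, RCLike.norm_conj]

variable {R : Type*} [CommRing R] [Fintype R]

theorem sum_norm_sum_mul_sq_eq [DecidableEq R] {ψ : AddChar R ℂ} (hψ : ψ.IsPrimitive)
    {ι : Type*} (P : Finset ι) (f : ι → R) :
    ∑ s, ‖∑ p ∈ P, ψ (s * f p)‖ ^ 2 = Fintype.card R * ∑ t, (#{p ∈ P | f p = t} : ℝ) ^ 2 := by
  have hexpand (s : R) :
      (‖∑ p ∈ P, ψ (s * f p)‖ ^ 2 : ℂ) = ∑ x ∈ P ×ˢ P, ψ (s * (f x.1 - f x.2)) := by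
    rw [← Complex.mul_conj', map_sum, sum_mul_sum, sum_product]
    refine sum_congr rfl fun p _ => sum_congr rfl fun p' _ => ?_
    rw [← map_neg_eq_conj, ← map_add_eq_mul, mul_sub, sub_eq_add_neg]
  apply Complex.ofReal_injective
  push_cast
  simp_rw [hexpand]
  rw [sum_comm]
  simp_rw [sum_mulShift _ hψ, sub_eq_zero]
  rw [← Nat.cast_sum, sum_ite, sum_const_zero, add_zero, sum_const, smul_eq_mul,
    ← sum_card_filter_sq_eq_card_filter_eq]
  push_cast
  ring

theorem norm_sum_mul_dist_sq_le {ι : Type*} [Fintype ι] (χ : AddChar R ℂ) (s : R)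
    (A B : Finset (ι → R)) :
    ‖∑ p ∈ A ×ˢ B, χ (s * ∑ i, (p.1 i - p.2 i) ^ 2)‖ ^ 2 ≤
      #A * ∑ a ∈ A, ‖∑ b ∈ B, χ (2 * s * (∑ i, a i * b i) - s * ∑ i, b i ^ 2)‖ ^ 2 := by
  refine le_trans (pow_le_pow_left₀ (norm_nonneg _) ?_ 2) sq_sum_le_card_mul_sum_sq
  have hsplit : ∑ p ∈ A ×ˢ B, χ (s * ∑ i, (p.1 i - p.2 i) ^ 2) = ∑ a ∈ A, ∑ b ∈ B,
      χ (s * ∑ i, a i ^ 2 - (2 * s * (∑ i, a i * b i) - s * ∑ i, b i ^ 2)) := by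
    rw [sum_product]
    refine sum_congr rfl fun a _ => sum_congr rfl fun b _ => ?_
    rw [sum_sub_sq_eq]
    ring_nf
  rw [hsplit]
  exact norm_sum_sum_sub_le χ A B _ _

end AddChar

theorem stmt_11_general {F : Type*} [Field F] [Fintype F] [DecidableEq F]
    (χ : AddChar F ℂ) (hχ : χ ≠ 1)
    (d : ℕ) (A B : Finset (Fin d → F)) :
    ∑ t : F, ((((A ×ˢ B).filter (fun p => ∑ i, (p.1 i - p.2 i) ^ 2 = t)).card : ℝ)) ^ 2 ≤
      (A.card : ℝ) ^ 2 * (B.card : ℝ) ^ 2 / (Fintype.card F) +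
        (A.card : ℝ) / (Fintype.card F) *
          ∑ a ∈ A, ∑ s ∈ Finset.univ.filter (fun s : F => s ≠ 0),
            (‖(∑ b ∈ B,
              χ (2 * s * (∑ i, a i * b i) - s * ∑ i, (b i) ^ 2))‖) ^ 2 := by
  set S : F → ℝ := fun s => ‖∑ p ∈ A ×ˢ B, χ (s * ∑ i, (p.1 i - p.2 i) ^ 2)‖ ^ 2 with hS
  have hq : (0 : ℝ) < Fintype.card F := mod_cast Fintype.card_pos
  have hS₀ : S 0 = (#A : ℝ) ^ 2 * #B ^ 2 := by simp [S, card_product, mul_pow]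
  calc _ = (∑ s, S s) / Fintype.card F := by
        rw [eq_div_iff hq.ne', hS, AddChar.sum_norm_sum_mul_sq_eq (.of_ne_one hχ), mul_comm]
    _ = (S 0 + ∑ s ∈ univ.erase 0, S s) / Fintype.card F := by
        rw [add_sum_erase _ _ (mem_univ 0)]
    _ ≤ ((#A : ℝ) ^ 2 * #B ^ 2 + ∑ s ∈ univ.erase 0,
          #A * ∑ a ∈ A, ‖∑ b ∈ B, χ (2 * s * (∑ i, a i * b i) - s * ∑ i, b i ^ 2)‖ ^ 2) /
            Fintype.card F := by
        rw [hS₀]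
        gcongr with s
        exact AddChar.norm_sum_mul_dist_sq_le χ s A B
    _ = _ := by
        rw [filter_ne', sum_comm, ← mul_sum]
        ring

/-- For `A, B ⊆ F_q^d` and `μ(t) = #{(a,b) ∈ A×B : ‖a−b‖ = t}`,
`∑_t μ(t)² ≤ |A|²|B|²/q + (|A|/q) ∑_{a∈A} ∑_{s≠0} |∑_{b∈B} χ(2s a·b − s‖b‖)|²`. -/
theorem stmt_11 {F : Type*} [Field F] [Fintype F] [DecidableEq F]
    (hodd : Odd (Fintype.card F))
    (χ : AddChar F ℂ) (hχ : χ ≠ 1)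
    (d : ℕ) (A B : Finset (Fin d → F)) :
    ∑ t : F, ((((A ×ˢ B).filter (fun p => ∑ i, (p.1 i - p.2 i) ^ 2 = t)).card : ℝ)) ^ 2 ≤
      (A.card : ℝ) ^ 2 * (B.card : ℝ) ^ 2 / (Fintype.card F) +
        (A.card : ℝ) / (Fintype.card F) *
          ∑ a ∈ A, ∑ s ∈ Finset.univ.filter (fun s : F => s ≠ 0),
            (‖(∑ b ∈ B,
              χ (2 * s * (∑ i, a i * b i) - s * ∑ i, (b i) ^ 2))‖) ^ 2 :=
  stmt_11_general χ hχ d A B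
end

section
/- Let d = 4k+2 with q ≡ 3 (mod 4), and suppose V = {v_1,…,v_{(d−2)/2}} ⊂ F_q^{d−2}×{0}×{0} is a set of (d−2)/2 linearly independent mutually orthogonal vectors. Set A = Span(V). Then A ⊆ S₀ (the zero sphere in F_q^d), and for any R ⊆ F_q with |R| = N, the set B = Span(V) + {(0,…,0,x,y) : x²+y² = r, r ∈ R} satisfies Δ(A,B) = R. -/
open Finset

open Polynomial in
lemma aux_sq_add_sq {F : Type*} [Field F] [Fintype F]
    (hodd : Fintype.card F % 2 = 1) (r : F) : ∃ x y : F, x ^ 2 + y ^ 2 = r := by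
  obtain ⟨a, b, hab⟩ := FiniteField.exists_root_sum_quadratic
    (f := (X : F[X]) ^ 2) (g := (X : F[X]) ^ 2 - C r) (degree_X_pow 2)
    (degree_X_pow_sub_C (by norm_num) r) hodd
  refine ⟨a, b, ?_⟩
  simp only [eval_pow, eval_X, eval_sub, eval_C] at hab
  linear_combination hab

lemma aux_sum_split {F : Type*} [Field F] {n : ℕ} (i j : Fin n) (hij : i ≠ j)
    (c : Fin n → F) (hci : c i = 0) (hcj : c j = 0) (x y : F) :
    ∑ t, (c t - if t = i then x else if t = j then y else 0) ^ 2
      = (∑ t, c t ^ 2) + (x ^ 2 + y ^ 2) := by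
  have h : ∀ t : Fin n, (c t - if t = i then x else if t = j then y else 0) ^ 2
      = c t ^ 2 + ((if t = i then x ^ 2 else 0) + (if t = j then y ^ 2 else 0)) := by
    intro t
    rcases eq_or_ne t i with rfl | h1
    · simp [hij, hci]
    · rcases eq_or_ne t j with rfl | h2
      · simp [h1, hcj]
      · simp [h1, h2]
  rw [Finset.sum_congr rfl fun t _ => h t, Finset.sum_add_distrib,
    Finset.sum_add_distrib, Finset.sum_ite_eq' , Finset.sum_ite_eq']
  simp

/-- Sharpness construction for the zero sphere: for `d = 4k+2`, `q ≡ 3 (mod 4)`, if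
`v₁,…,v_{(d−2)/2}` are linearly independent, mutually orthogonal vectors supported on
the first `d−2` coordinates, then `A = Span(v)` lies on `S₀`, and for any `R ⊆ F_q`, the set
`B = Span(v) + {(0,…,0,x,y) : x² + y² ∈ R}` satisfies `Δ(A,B) = R`. -/
theorem stmt_18 {F : Type*} [Field F] [Fintype F] (hodd : Odd (Fintype.card F))
    (hq : Fintype.card F % 4 = 3) (d : ℕ) (hd : d % 4 = 2) (hd6 : 6 ≤ d)
    (v : Fin ((d - 2) / 2) → (Fin d → F))
    (hsupp : ∀ i, v i ⟨d - 2, by omega⟩ = 0 ∧ v i ⟨d - 1, by omega⟩ = 0)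
    (hlin : LinearIndependent F v)
    (horth : ∀ i j, ∑ t, v i t * v j t = 0) :
    (∀ a ∈ Submodule.span F (Set.range v), ∑ t, (a t) ^ 2 = 0) ∧
    ∀ R : Set F,
      {r : F | ∃ a ∈ Submodule.span F (Set.range v),
        ∃ b ∈ {w : Fin d → F | ∃ a' ∈ Submodule.span F (Set.range v), ∃ x y : F,
          x ^ 2 + y ^ 2 ∈ R ∧
          w = a' + fun t => if t = (⟨d - 2, by omega⟩ : Fin d) then x
            else if t = (⟨d - 1, by omega⟩ : Fin d) then y else 0},
        r = ∑ t, (a t - b t) ^ 2} = R := by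
  set i₁ : Fin d := ⟨d - 2, by omega⟩
  set i₂ : Fin d := ⟨d - 1, by omega⟩
  have hij : i₁ ≠ i₂ := by simp only [i₁, i₂, Fin.mk.injEq, ne_eq]; omega
  -- every pair of span elements is orthogonal
  have key : ∀ a ∈ Submodule.span F (Set.range v), ∀ b ∈ Submodule.span F (Set.range v),
      ∑ t, a t * b t = 0 := by
    intro a ha
    induction ha using Submodule.span_induction with
    | mem a hmem =>
      obtain ⟨i, rfl⟩ := hmem
      intro b hb
      induction hb using Submodule.span_induction with
      | mem b hmemb =>
        obtain ⟨j, rfl⟩ := hmemb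
        exact horth i j
      | zero => simp
      | add b c _ _ hb hc =>
        simp only [Pi.add_apply, mul_add, Finset.sum_add_distrib, hb, hc, add_zero]
      | smul r b _ hb =>
        simp only [Pi.smul_apply, smul_eq_mul, mul_left_comm, ← Finset.mul_sum, hb, mul_zero]
    | zero => simp
    | add a c _ _ ha hc =>
      intro b hb
      simp only [Pi.add_apply, add_mul, Finset.sum_add_distrib, ha b hb, hc b hb, add_zero]
    | smul r a _ ha =>
      intro b hb
      simp only [Pi.smul_apply, smul_eq_mul, mul_assoc, ← Finset.mul_sum, ha b hb, mul_zero]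
  have hiso : ∀ a ∈ Submodule.span F (Set.range v), ∑ t, (a t) ^ 2 = 0 := by
    intro a ha
    have := key a ha a ha
    simpa [sq] using this
  -- span elements vanish on last two coordinates
  have hvan : ∀ a ∈ Submodule.span F (Set.range v), a i₁ = 0 ∧ a i₂ = 0 := by
    intro a ha
    induction ha using Submodule.span_induction with
    | mem a hmem => obtain ⟨i, rfl⟩ := hmem; exact hsupp i
    | zero => simp
    | add a b _ _ ha hb => simp [ha.1, ha.2, hb.1, hb.2]
    | smul r a _ ha => simp [ha.1, ha.2]
  refine ⟨hiso, fun R => ?_⟩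
  ext r
  simp only [Set.mem_setOf_eq]
  constructor
  · rintro ⟨a, ha, b, ⟨a', ha', x, y, hxy, rfl⟩, rfl⟩
    have hc : a - a' ∈ Submodule.span F (Set.range v) := Submodule.sub_mem _ ha ha'
    have h1 := (hvan _ hc).1
    have h2 := (hvan _ hc).2
    have := aux_sum_split i₁ i₂ hij (a - a') h1 h2 x y
    have heq : ∀ t : Fin d, a t - (a' + fun t => if t = i₁ then x
        else if t = i₂ then y else 0) t
        = (a - a') t - (if t = i₁ then x else if t = i₂ then y else 0) := by
      intro t; simp [Pi.sub_apply]; ring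
    have hsum1 : ∑ t, (a t - (a' + fun t => if t = i₁ then x
        else if t = i₂ then y else 0) t) ^ 2
        = ∑ t, ((a - a') t - (if t = i₁ then x else if t = i₂ then y else 0)) ^ 2 :=
      Finset.sum_congr rfl fun t _ => by rw [heq t]
    rw [hsum1, this, hiso _ hc, zero_add]
    exact hxy
  · intro hr
    obtain ⟨x, y, hxy⟩ := aux_sq_add_sq (by omega) r
    refine ⟨0, Submodule.zero_mem _,
      (0 : Fin d → F) + fun t => if t = i₁ then x else if t = i₂ then y else 0,
      ⟨0, Submodule.zero_mem _, x, y, by rw [hxy]; exact hr, rfl⟩, ?_⟩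
    have := aux_sum_split i₁ i₂ hij (0 : Fin d → F) rfl rfl x y
    simp only [Pi.zero_apply, zero_add, Pi.add_apply] at this ⊢
    rw [this]
    simp [hxy]
end

section
/- Let A ⊆ S_j ⊂ F_q^d with j ≠ 0, and B ⊆ F_q^d, and μ(t) = #{(a,b) ∈ A×B : ‖a−b‖ = t}. Then Σ_{t∈F_q} μ(t)² ≤ |A|²|B|²/q + q^{d−1}|A||B| + q^{−2} η^d(−1) G₁^d |A| Σ_{b,b'∈B} Σ_{s,r∈F_q^*} η^d(r) χ(jr + s²‖b'−b‖/r) χ(s(‖b'‖−‖b‖)). -/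
/-!
Write `q = |F|` and `Q(x) = x₁² + ⋯ + x_d²`. By orthogonality of additive characters,
`q · Σ_t μ(t)² = Σ_u |M(u)|²` with `M(u) = Σ_{(a,b) ∈ A×B} χ(u Q(a - b))`, and `u = 0`
contributes `|A|²|B|²`. For `a ∈ S_j` we have `Q(a - b) = j - 2 a·b + Q(b)`, so `M(u)` is a sum
over `a ∈ A` of a function of `a` alone; Cauchy–Schwarz followed by enlarging `A` to the whole
sphere `S_j` bounds `|M(u)|²` by `|A|` times a sum over `S_j`. Expanding the square, that sum is
governed by the Fourier transform of `S_j`, which completing the square and the quadratic Gauss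
sum evaluate explicitly: the point mass at `0` gives the `q^{d-1}|A||B|` term and the rest is
the Kloosterman-type term.
-/

open Finset

lemma four_ne_zero_of_ringChar_ne_two_s19 {R : Type*} [Semiring R] [NoZeroDivisors R]
    [Nontrivial R] (hR : ringChar R ≠ 2) : (4 : R) ≠ 0 := by
  rw [show (4 : R) = 2 * 2 by norm_num]
  exact mul_ne_zero (Ring.two_ne_zero hR) (Ring.two_ne_zero hR)

lemma sub_one_mul_pow_le_sq_mul_pow_pred {q : ℝ} (hq : 0 ≤ q) (n : ℕ) :
    (q - 1) * q ^ n ≤ q ^ 2 * q ^ (n - 1) := by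
  rcases n with _ | n
  · simp only [pow_zero, Nat.zero_sub, mul_one]
    nlinarith
  · rw [Nat.add_sub_cancel, pow_succ]
    nlinarith [pow_nonneg hq n]

lemma sum_card_fiber_sq {α β : Type*} [Fintype β] [DecidableEq β] (s : Finset α) (f : α → β) :
    ∑ t, #{p ∈ s | f p = t} ^ 2 = ∑ p ∈ s, #{p' ∈ s | f p' = f p} := by
  rw [← sum_fiberwise s f fun p => #{p' ∈ s | f p' = f p}]
  refine sum_congr rfl fun t _ => ?_
  rw [sq, ← smul_eq_mul, ← sum_const]
  exact sum_congr rfl fun p hp => by rw [(mem_filter.mp hp).2]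

lemma norm_sum_sq_le_card_mul_sum_norm_sq {α E : Type*} [SeminormedAddCommGroup E]
    {A S : Finset α} (hAS : A ⊆ S) (g : α → E) :
    ‖∑ a ∈ A, g a‖ ^ 2 ≤ #A * ∑ x ∈ S, ‖g x‖ ^ 2 :=
  calc ‖∑ a ∈ A, g a‖ ^ 2 ≤ (∑ a ∈ A, ‖g a‖) ^ 2 := by gcongr; exact norm_sum_le _ _
    _ ≤ #A * ∑ a ∈ A, ‖g a‖ ^ 2 := sq_sum_le_card_mul_sum_sq
    _ ≤ #A * ∑ x ∈ S, ‖g x‖ ^ 2 := by gcongr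

lemma AddChar.sum_pi {A M ι : Type*} [AddCommMonoid A] [Fintype A] [CommSemiring M]
    [Fintype ι] [DecidableEq ι] (ψ : AddChar A M) (f : ι → A → A) :
    ∑ x : ι → A, ψ (∑ i, f i (x i)) = ∏ i, ∑ y, ψ (f i y) := by
  simp_rw [map_sum_eq_prod]
  exact (Fintype.prod_sum fun i y => ψ (f i y)).symm

section SqNorm

variable {R ι : Type*} [CommRing R] [Fintype ι]

def sqNorm (x : ι → R) : R := ∑ i, x i ^ 2

lemma sqNorm_smul (c : R) (x : ι → R) : sqNorm (c • x) = c ^ 2 * sqNorm x := by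
  simp [sqNorm, mul_sum, mul_pow]

lemma sqNorm_neg (x : ι → R) : sqNorm (-x) = sqNorm x := by
  simp [sqNorm]

lemma sqNorm_sub_comm (x y : ι → R) : sqNorm (x - y) = sqNorm (y - x) := by
  rw [← neg_sub, sqNorm_neg]

lemma sqNorm_sub (x y : ι → R) : sqNorm (x - y) = sqNorm x - 2 * (x ⬝ᵥ y) + sqNorm y := by
  simp only [sqNorm, dotProduct, mul_sum, ← sum_sub_distrib, ← sum_add_distrib, Pi.sub_apply]
  exact sum_congr rfl fun i _ => by ring

lemma AddChar.sum_product_sqNorm_sub {M : Type*} [CommSemiring M] (ψ : AddChar R M)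
    {A : Finset (ι → R)} {j : R} (hA : ∀ a ∈ A, sqNorm a = j) (B : Finset (ι → R)) (u : R) :
    ∑ p ∈ A ×ˢ B, ψ (u * sqNorm (p.1 - p.2))
      = ψ (u * j) * ∑ a ∈ A, ∑ b ∈ B, ψ (u * (sqNorm b - 2 * (a ⬝ᵥ b))) := by
  rw [sum_product, mul_sum]
  refine sum_congr rfl fun a ha => ?_
  rw [mul_sum]
  refine sum_congr rfl fun b _ => ?_
  rw [← map_add_eq_mul, sqNorm_sub, hA a ha]
  ring_nf

lemma AddChar.norm_sum_sq_eq_sum_sum [Finite R] (ψ : AddChar R ℂ) (B : Finset (ι → R)) (u : R)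
    (x : ι → R) :
    (‖∑ b ∈ B, ψ (u * (sqNorm b - 2 * (x ⬝ᵥ b)))‖ : ℂ) ^ 2
      = ∑ b ∈ B, ∑ b' ∈ B, ψ (u * (sqNorm b' - sqNorm b)) * ψ (((2 * u) • (b - b')) ⬝ᵥ x) := by
  rw [← Complex.mul_conj', mul_comm, map_sum, sum_mul_sum]
  refine sum_congr rfl fun b _ => sum_congr rfl fun b' _ => ?_
  rw [← map_neg_eq_conj, ← map_add_eq_mul, ← map_add_eq_mul, smul_dotProduct, sub_dotProduct,
    smul_eq_mul, dotProduct_comm b, dotProduct_comm b']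
  ring_nf

end SqNorm

section CharacterSums

variable {F : Type*} [Field F] [Fintype F] [DecidableEq F]

variable (F) in
noncomputable def complexQuadraticChar : MulChar F ℂ :=
  (quadraticChar F).ringHomComp (Int.castRingHom ℂ)

local notation "η" => complexQuadraticChar F

lemma complexQuadraticChar_isQuadratic : (η).IsQuadratic :=
  (quadraticChar_isQuadratic F).comp _

lemma eq_complexQuadraticChar {η' : F → ℂ} (h0 : η' 0 = 0)
    (hsq : ∀ s : F, s ≠ 0 → IsSquare s → η' s = 1)
    (hnsq : ∀ s : F, s ≠ 0 → ¬IsSquare s → η' s = -1) : η' = η := by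
  ext s
  simp only [complexQuadraticChar, MulChar.ringHomComp_apply, eq_intCast]
  rcases eq_or_ne s 0 with rfl | hs
  · simp [h0]
  by_cases h : IsSquare s
  · simp [hsq s hs h, (quadraticChar_one_iff_isSquare hs).mpr h]
  · simp [hnsq s hs h, quadraticChar_neg_one_iff_not_isSquare.mpr h]

lemma complexQuadraticChar_card_sqrts (hF : ringChar F ≠ 2) (y : F) :
    (#{x | x ^ 2 = y} : ℂ) = 1 + η y := by
  have h := quadraticChar_card_sqrts hF y
  rw [Set.toFinset_ofPred] at h
  simp only [complexQuadraticChar, MulChar.ringHomComp_apply, eq_intCast]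
  exact_mod_cast h.trans (add_comm _ _)

variable {ψ : AddChar F ℂ}

lemma AddChar.sum_mul_eq_ite (hψ : ψ ≠ 1) (c : F) :
    ∑ x, ψ (c * x) = if c = 0 then (Fintype.card F : ℂ) else 0 := by
  simp_rw [mul_comm c]
  rw [sum_mulShift c (IsPrimitive.of_ne_one hψ)]
  split_ifs <;> simp

lemma AddChar.sum_mul_sq (hF : ringChar F ≠ 2) (hψ : ψ ≠ 1) {r : F} (hr : r ≠ 0) :
    ∑ x, ψ (r * x ^ 2) = η r * gaussSum η ψ := by
  calc ∑ x, ψ (r * x ^ 2) = ∑ y, (1 + η y) * ψ (r * y) := by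
        rw [← sum_fiberwise univ (· ^ 2)]
        refine sum_congr rfl fun y _ => ?_
        rw [← complexQuadraticChar_card_sqrts hF, ← nsmul_eq_mul, ← sum_const]
        exact sum_congr rfl fun x hx => by rw [(mem_filter.mp hx).2]
    _ = gaussSum η (mulShift ψ (Units.mk0 r hr)) := by
        simp [add_mul, sum_add_distrib, sum_mul_eq_ite hψ, hr, gaussSum]
    _ = η r * gaussSum η ψ := by
        rw [gaussSum_mulShift_eq, complexQuadraticChar_isQuadratic.inv, Units.val_mk0]

lemma AddChar.sum_mul_sq_add_mul (hF : ringChar F ≠ 2) (hψ : ψ ≠ 1) {r : F} (hr : r ≠ 0)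
    (c : F) : ∑ x, ψ (r * x ^ 2 + c * x) = η r * gaussSum η ψ * ψ (-c ^ 2 / (4 * r)) := by
  have h2 : (2 : F) ≠ 0 := Ring.two_ne_zero hF
  have h4 : (4 : F) ≠ 0 := four_ne_zero_of_ringChar_ne_two_s19 hF
  have complete_sq (x : F) : r * (x - c / (2 * r)) ^ 2 + c * (x - c / (2 * r))
      = r * x ^ 2 + -c ^ 2 / (4 * r) := by
    field_simp
    ring
  rw [← (Equiv.subRight (c / (2 * r))).sum_comp]
  simp_rw [Equiv.subRight_apply, complete_sq, map_add_eq_mul, ← sum_mul, sum_mul_sq hF hψ hr]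

lemma AddChar.card_mul_sum_card_fiber_sq {α : Type*} (hψ : ψ ≠ 1) (s : Finset α) (f : α → F) :
    (Fintype.card F : ℝ) * ∑ t, (#{p ∈ s | f p = t} : ℝ) ^ 2
      = #s ^ 2 + ∑ u with u ≠ 0, ‖∑ p ∈ s, ψ (u * f p)‖ ^ 2 := by
  have hfib : ∑ t, (#{p ∈ s | f p = t} : ℂ) ^ 2 = ∑ p ∈ s, (#{p' ∈ s | f p' = f p} : ℂ) := by
    exact_mod_cast sum_card_fiber_sq s f
  have zero_term : (#s : ℝ) ^ 2 = ‖∑ p ∈ s, ψ (0 * f p)‖ ^ 2 := by simp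
  rw [zero_term, filter_ne',
    add_sum_erase univ (fun u => ‖∑ p ∈ s, ψ (u * f p)‖ ^ 2) (mem_univ 0)]
  apply Complex.ofReal_injective
  push_cast
  simp_rw [hfib, ← Complex.mul_conj', map_sum, ← map_neg_eq_conj, sum_mul_sum, ← map_add_eq_mul,
    mul_sum]
  rw [sum_comm]
  refine sum_congr rfl fun p _ => ?_
  rw [sum_comm]
  simp_rw [show ∀ u p', u * f p + -(u * f p') = (f p - f p') * u by intros; ring,
    sum_mul_eq_ite hψ, sub_eq_zero, eq_comm (a := f p), ← sum_filter, sum_const, nsmul_eq_mul,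
    mul_comm]

variable {ι : Type*} [Fintype ι] [DecidableEq ι]

lemma AddChar.sum_dotProduct (hψ : ψ ≠ 1) (m : ι → F) :
    ∑ x, ψ (m ⬝ᵥ x) = if m = 0 then (Fintype.card F : ℂ) ^ Fintype.card ι else 0 := by
  rw [show ∑ x, ψ (m ⬝ᵥ x) = ∏ i, ∑ y, ψ (m i * y) from sum_pi ψ fun i y => m i * y]
  simp_rw [sum_mul_eq_ite hψ]
  split_ifs with hm
  · simp [hm]
  · obtain ⟨i, hi⟩ := Function.ne_iff.mp hm
    exact prod_eq_zero (mem_univ i) (if_neg hi)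

lemma AddChar.sum_mul_sqNorm_add_dotProduct (hF : ringChar F ≠ 2) (hψ : ψ ≠ 1) {r : F}
    (hr : r ≠ 0) (m : ι → F) :
    ∑ x, ψ (r * sqNorm x + m ⬝ᵥ x)
      = (η r * gaussSum η ψ) ^ Fintype.card ι * ψ (-sqNorm m / (4 * r)) := by
  simp_rw [sqNorm, dotProduct, mul_sum, ← sum_add_distrib]
  rw [sum_pi ψ fun i y => r * y ^ 2 + m i * y]
  simp_rw [sum_mul_sq_add_mul hF hψ hr, prod_mul_distrib, prod_const, card_univ,
    ← map_sum_eq_prod, ← sum_div, sum_neg_distrib, mul_pow]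

lemma AddChar.card_mul_sum_sphere (hF : ringChar F ≠ 2) (hψ : ψ ≠ 1) (j : F) (m : ι → F) :
    (Fintype.card F : ℂ) * ∑ x with sqNorm x = j, ψ (m ⬝ᵥ x)
      = (if m = 0 then (Fintype.card F : ℂ) ^ Fintype.card ι else 0)
        + η (-1) ^ Fintype.card ι * gaussSum η ψ ^ Fintype.card ι
          * ∑ r with r ≠ 0, η r ^ Fintype.card ι * ψ (j * r + sqNorm m / (4 * r)) := by
  have indicator (x : ι → F) : (Fintype.card F : ℂ) * (if sqNorm x = j then 1 else 0)
      = ∑ r, ψ (r * j) * ψ (-r * sqNorm x) := by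
    simp_rw [← map_add_eq_mul, show ∀ r : F, r * j + -r * sqNorm x = (j - sqNorm x) * r by
      intro r; ring, sum_mul_eq_ite hψ, sub_eq_zero, eq_comm (a := j)]
    split_ifs <;> simp
  calc (Fintype.card F : ℂ) * ∑ x with sqNorm x = j, ψ (m ⬝ᵥ x)
      = ∑ x, ((Fintype.card F : ℂ) * if sqNorm x = j then 1 else 0) * ψ (m ⬝ᵥ x) := by
        rw [sum_filter, mul_sum]
        exact sum_congr rfl fun x _ => by split_ifs <;> simp
    _ = ∑ r, ψ (r * j) * ∑ x, ψ (-r * sqNorm x + m ⬝ᵥ x) := by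
        simp_rw [indicator, sum_mul, mul_sum, mul_assoc, ← map_add_eq_mul]
        exact sum_comm
    _ = _ := by
        rw [← add_sum_erase _ _ (mem_univ 0), filter_ne']
        simp only [zero_mul, neg_zero, zero_add, map_zero_eq_one, one_mul, sum_dotProduct hψ]
        rw [mul_sum]
        congr 1
        refine sum_congr rfl fun r hr => ?_
        have hr : -r ≠ 0 := neg_ne_zero.mpr (ne_of_mem_erase hr)
        have hη : η (-r) = η (-1) * η r := by rw [← map_mul, neg_one_mul]
        rw [sum_mul_sqNorm_add_dotProduct hF hψ hr, hη, mul_neg, div_neg, neg_div, neg_neg,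
          map_add_eq_mul, mul_comm j r]
        ring

lemma AddChar.card_mul_sum_sphere_norm_sq (hF : ringChar F ≠ 2) (hψ : ψ ≠ 1) (j : F)
    (B : Finset (ι → F)) {u : F} (hu : u ≠ 0) :
    (((Fintype.card F : ℝ) * ∑ x with sqNorm x = j,
        ‖∑ b ∈ B, ψ (u * (sqNorm b - 2 * (x ⬝ᵥ b)))‖ ^ 2 : ℝ) : ℂ)
      = (Fintype.card F : ℂ) ^ Fintype.card ι * #B
        + η (-1) ^ Fintype.card ι * gaussSum η ψ ^ Fintype.card ι *
          ∑ b ∈ B, ∑ b' ∈ B, ∑ r with r ≠ 0, η r ^ Fintype.card ι *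
            ψ (j * r + u ^ 2 * sqNorm (b' - b) / r) * ψ (u * (sqNorm b' - sqNorm b)) := by
  have h2u : (2 * u : F) ≠ 0 := mul_ne_zero (Ring.two_ne_zero hF) hu
  have sphere (b b' : ι → F) :
      (Fintype.card F : ℂ) * ∑ x with sqNorm x = j, ψ (((2 * u) • (b - b')) ⬝ᵥ x)
        = (if b = b' then (Fintype.card F : ℂ) ^ Fintype.card ι else 0)
          + η (-1) ^ Fintype.card ι * gaussSum η ψ ^ Fintype.card ι *
            ∑ r with r ≠ 0, η r ^ Fintype.card ι * ψ (j * r + u ^ 2 * sqNorm (b' - b) / r) := by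
    rw [card_mul_sum_sphere hF hψ, sqNorm_smul, sqNorm_sub_comm b b']
    congr 2
    · simp [h2u, sub_eq_zero]
    · refine sum_congr rfl fun r _ => ?_
      have h4 : (4 : F) ≠ 0 := four_ne_zero_of_ringChar_ne_two_s19 hF
      congr 3
      field_simp
      ring
  calc _ = ∑ b ∈ B, ∑ b' ∈ B, ψ (u * (sqNorm b' - sqNorm b)) *
          ((Fintype.card F : ℂ) * ∑ x with sqNorm x = j, ψ (((2 * u) • (b - b')) ⬝ᵥ x)) := by
        push_cast
        simp_rw [norm_sum_sq_eq_sum_sum ψ, mul_sum]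
        rw [sum_comm]
        refine sum_congr rfl fun b _ => ?_
        rw [sum_comm]
        exact sum_congr rfl fun b' _ => sum_congr rfl fun x _ => by ring
    _ = _ := by
        simp_rw [sphere, mul_add, sum_add_distrib, mul_ite, mul_zero, sum_ite_eq, sub_self,
          mul_zero, map_zero_eq_one, one_mul, sum_ite_mem, inter_self, sum_const, nsmul_eq_mul,
          mul_comm (#B : ℂ), mul_sum]
        congr 1
        exact sum_congr rfl fun b _ => sum_congr rfl fun b' _ => sum_congr rfl fun r _ => by ring

variable {j : F} {A : Finset (ι → F)}

lemma AddChar.norm_sum_product_sqNorm_sub_sq_le (hA : ∀ a ∈ A, sqNorm a = j)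
    (B : Finset (ι → F)) (u : F) :
    ‖∑ p ∈ A ×ˢ B, ψ (u * sqNorm (p.1 - p.2))‖ ^ 2
      ≤ #A * ∑ x with sqNorm x = j, ‖∑ b ∈ B, ψ (u * (sqNorm b - 2 * (x ⬝ᵥ b)))‖ ^ 2 := by
  rw [sum_product_sqNorm_sub ψ hA, norm_mul, norm_apply, one_mul]
  exact norm_sum_sq_le_card_mul_sum_norm_sq (fun a ha => mem_filter.mpr ⟨mem_univ a, hA a ha⟩) _

lemma AddChar.card_mul_norm_sum_product_sq_le (hF : ringChar F ≠ 2) (hψ : ψ ≠ 1)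
    (hA : ∀ a ∈ A, sqNorm a = j) (B : Finset (ι → F)) {u : F} (hu : u ≠ 0) :
    (Fintype.card F : ℝ) * ‖∑ p ∈ A ×ˢ B, ψ (u * sqNorm (p.1 - p.2))‖ ^ 2
      ≤ #A * ((Fintype.card F : ℝ) ^ Fintype.card ι * #B
        + (η (-1) ^ Fintype.card ι * gaussSum η ψ ^ Fintype.card ι *
          ∑ b ∈ B, ∑ b' ∈ B, ∑ r with r ≠ 0, η r ^ Fintype.card ι *
            ψ (j * r + u ^ 2 * sqNorm (b' - b) / r) * ψ (u * (sqNorm b' - sqNorm b))).re) := by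
  have h := congrArg Complex.re (card_mul_sum_sphere_norm_sq hF hψ j B hu)
  rw [Complex.ofReal_re, Complex.add_re] at h
  calc _ ≤ (Fintype.card F : ℝ) * (#A * ∑ x with sqNorm x = j,
          ‖∑ b ∈ B, ψ (u * (sqNorm b - 2 * (x ⬝ᵥ b)))‖ ^ 2) := by
        gcongr
        exact norm_sum_product_sqNorm_sub_sq_le hA B u
    _ = _ := by
        rw [mul_left_comm, h]
        norm_cast

lemma AddChar.card_sq_mul_sum_sq_card_sqNorm_sub_le (hF : ringChar F ≠ 2) (hψ : ψ ≠ 1)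
    (hA : ∀ a ∈ A, sqNorm a = j) (B : Finset (ι → F)) :
    (Fintype.card F : ℝ) ^ 2 * ∑ t, (#{p ∈ A ×ˢ B | sqNorm (p.1 - p.2) = t} : ℝ) ^ 2
      ≤ Fintype.card F * (#A * #B) ^ 2
        + (Fintype.card F - 1) * (Fintype.card F : ℝ) ^ Fintype.card ι * (#A * #B)
        + #A * (η (-1) ^ Fintype.card ι * gaussSum η ψ ^ Fintype.card ι *
          ∑ b ∈ B, ∑ b' ∈ B, ∑ s with s ≠ 0, ∑ r with r ≠ 0, η r ^ Fintype.card ι *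
            ψ (j * r + s ^ 2 * sqNorm (b' - b) / r) * ψ (s * (sqNorm b' - sqNorm b))).re := by
  set q : ℝ := (Fintype.card F : ℝ)
  set c : ℂ := η (-1) ^ Fintype.card ι * gaussSum η ψ ^ Fintype.card ι
  set W : F → ℂ := fun s => ∑ b ∈ B, ∑ b' ∈ B, ∑ r with r ≠ 0, η r ^ Fintype.card ι *
    ψ (j * r + s ^ 2 * sqNorm (b' - b) / r) * ψ (s * (sqNorm b' - sqNorm b))
  have hW : ∑ s with s ≠ 0, W s = ∑ b ∈ B, ∑ b' ∈ B, ∑ s with s ≠ 0, ∑ r with r ≠ 0,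
      η r ^ Fintype.card ι * ψ (j * r + s ^ 2 * sqNorm (b' - b) / r) *
        ψ (s * (sqNorm b' - sqNorm b)) := by
    rw [sum_comm]
    exact sum_congr rfl fun b _ => sum_comm
  have card_units : (#{s : F | s ≠ 0} : ℝ) = q - 1 := by
    rw [filter_ne', card_erase_of_mem (mem_univ _), card_univ, Nat.cast_pred Fintype.card_pos]
  rw [sq q, mul_assoc, card_mul_sum_card_fiber_sq hψ, card_product, mul_add, mul_sum, ← hW,
    mul_sum, Complex.re_sum, mul_sum, Nat.cast_mul, add_assoc]
  gcongr
  calc _ ≤ ∑ u with u ≠ 0, #A * (q ^ Fintype.card ι * #B + (c * W u).re) :=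
        sum_le_sum fun u hu => card_mul_norm_sum_product_sq_le hF hψ hA B (mem_filter.mp hu).2
    _ = _ := by
        rw [sum_congr rfl fun u _ => mul_add _ _ _, sum_add_distrib, sum_const, nsmul_eq_mul,
          card_units]
        ring

theorem AddChar.sum_sq_card_sqNorm_sub_le (hF : ringChar F ≠ 2) (hψ : ψ ≠ 1)
    (hA : ∀ a ∈ A, sqNorm a = j) (B : Finset (ι → F)) :
    ∑ t, (#{p ∈ A ×ˢ B | sqNorm (p.1 - p.2) = t} : ℝ) ^ 2 ≤
      (#A : ℝ) ^ 2 * (#B : ℝ) ^ 2 / Fintype.card F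
        + (Fintype.card F : ℝ) ^ (Fintype.card ι - 1) * #A * #B
        + (((Fintype.card F : ℂ) ^ 2)⁻¹ * η (-1) ^ Fintype.card ι
          * gaussSum η ψ ^ Fintype.card ι * #A *
          ∑ b ∈ B, ∑ b' ∈ B, ∑ s with s ≠ 0, ∑ r with r ≠ 0, η r ^ Fintype.card ι *
            ψ (j * r + s ^ 2 * sqNorm (b' - b) / r) * ψ (s * (sqNorm b' - sqNorm b))).re := by
  set q : ℝ := (Fintype.card F : ℝ)
  set n := Fintype.card ι
  set S : ℂ := ∑ b ∈ B, ∑ b' ∈ B, ∑ s with s ≠ 0, ∑ r with r ≠ 0, η r ^ n *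
    ψ (j * r + s ^ 2 * sqNorm (b' - b) / r) * ψ (s * (sqNorm b' - sqNorm b))
  set Z : ℂ := η (-1) ^ n * gaussSum η ψ ^ n * S
  have hq : 0 < q := by positivity
  have hre : (((Fintype.card F : ℂ) ^ 2)⁻¹ * η (-1) ^ n * gaussSum η ψ ^ n * #A * S).re
      = #A * Z.re / q ^ 2 := by
    rw [mul_div_right_comm, ← Complex.re_ofReal_mul]
    congr 1
    simp only [q, Z]
    push_cast
    ring
  rw [hre]
  refine le_of_mul_le_mul_left ?_ (pow_pos hq 2)
  calc _ ≤ q * (#A * #B) ^ 2 + (q - 1) * q ^ n * (#A * #B) + #A * Z.re :=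
        card_sq_mul_sum_sq_card_sqNorm_sub_le hF hψ hA B
    _ ≤ q * (#A * #B) ^ 2 + q ^ 2 * q ^ (n - 1) * (#A * #B) + #A * Z.re := by
        have := sub_one_mul_pow_le_sq_mul_pow_pred hq.le n
        gcongr
    _ = _ := by
        field_simp

end CharacterSums

theorem stmt_19_general {F : Type*} [Field F] [Fintype F] [DecidableEq F]
    (hodd : Odd (Fintype.card F))
    (χ : AddChar F ℂ) (hχ : χ ≠ 1)
    (η : F → ℂ) (hη0 : η 0 = 0)
    (hη1 : ∀ s : F, s ≠ 0 → IsSquare s → η s = 1)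
    (hη2 : ∀ s : F, s ≠ 0 → ¬IsSquare s → η s = -1)
    (d : ℕ) (j : F)
    (A B : Finset (Fin d → F)) (hA : ∀ a ∈ A, ∑ i, (a i) ^ 2 = j) :
    ∑ t : F, ((((A ×ˢ B).filter (fun p => ∑ i, (p.1 i - p.2 i) ^ 2 = t)).card : ℝ)) ^ 2 ≤
      (A.card : ℝ) ^ 2 * (B.card : ℝ) ^ 2 / (Fintype.card F) +
      (Fintype.card F : ℝ) ^ (d - 1) * A.card * B.card +
      (((Fintype.card F : ℂ) ^ 2)⁻¹ * η (-1) ^ d *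
        (∑ s ∈ Finset.univ.filter (fun s : F => s ≠ 0), η s * χ s) ^ d * (A.card : ℂ) *
        ∑ b ∈ B, ∑ b' ∈ B,
          ∑ s ∈ Finset.univ.filter (fun s : F => s ≠ 0),
            ∑ r ∈ Finset.univ.filter (fun r : F => r ≠ 0),
              η r ^ d * χ (j * r + s ^ 2 * (∑ i, (b' i - b i) ^ 2) / r) *
                χ (s * ((∑ i, (b' i) ^ 2) - ∑ i, (b i) ^ 2))).re := by
  have hF : ringChar F ≠ 2 := fun h => by
    simpa [Nat.odd_iff.mp hodd] using FiniteField.even_card_iff_char_two.mp h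
  obtain rfl := eq_complexQuadraticChar hη0 hη1 hη2
  have hG : ∑ s with s ≠ 0, complexQuadraticChar F s * χ s
      = gaussSum (complexQuadraticChar F) χ := by
    rw [gaussSum, filter_ne', ← add_sum_erase _ _ (mem_univ 0), MulChar.map_zero, zero_mul,
      zero_add]
  have h := AddChar.sum_sq_card_sqNorm_sub_le hF hχ hA B
  rw [Fintype.card_fin] at h
  rw [hG]
  -- `h` is the goal up to unfolding `sqNorm`
  exact h

/-- Key lemma for spheres: for `A ⊆ S_j` (`j ≠ 0`), `B ⊆ F_q^d`, and
`μ(t) = #{(a,b) ∈ A×B : ‖a−b‖ = t}`,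
`∑_t μ(t)² ≤ |A|²|B|²/q + q^{d−1}|A||B| +
  q^{−2} η(−1)^d G₁^d |A| ∑_{b,b'∈B} ∑_{s,r≠0} η(r)^d χ(jr + s²‖b'−b‖/r) χ(s(‖b'‖−‖b‖))`,
where the last (a priori complex) term is interpreted via its real part. -/
theorem stmt_19 {F : Type*} [Field F] [Fintype F] [DecidableEq F]
    (hodd : Odd (Fintype.card F))
    (χ : AddChar F ℂ) (hχ : χ ≠ 1)
    (η : F → ℂ) (hη0 : η 0 = 0)
    (hη1 : ∀ s : F, s ≠ 0 → IsSquare s → η s = 1)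
    (hη2 : ∀ s : F, s ≠ 0 → ¬IsSquare s → η s = -1)
    (d : ℕ) (j : F) (hj : j ≠ 0)
    (A B : Finset (Fin d → F)) (hA : ∀ a ∈ A, ∑ i, (a i) ^ 2 = j) :
    ∑ t : F, ((((A ×ˢ B).filter (fun p => ∑ i, (p.1 i - p.2 i) ^ 2 = t)).card : ℝ)) ^ 2 ≤
      (A.card : ℝ) ^ 2 * (B.card : ℝ) ^ 2 / (Fintype.card F) +
      (Fintype.card F : ℝ) ^ (d - 1) * A.card * B.card +
      (((Fintype.card F : ℂ) ^ 2)⁻¹ * η (-1) ^ d *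
        (∑ s ∈ Finset.univ.filter (fun s : F => s ≠ 0), η s * χ s) ^ d * (A.card : ℂ) *
        ∑ b ∈ B, ∑ b' ∈ B,
          ∑ s ∈ Finset.univ.filter (fun s : F => s ≠ 0),
            ∑ r ∈ Finset.univ.filter (fun r : F => r ≠ 0),
              η r ^ d * χ (j * r + s ^ 2 * (∑ i, (b' i - b i) ^ 2) / r) *
                χ (s * ((∑ i, (b' i) ^ 2) - ∑ i, (b i) ^ 2))).re :=
  stmt_19_general hodd χ hχ η hη0 hη1 hη2 d j A B hA
end
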